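/- arXiv:2604.22221 — 4 statements merged into one kernel-verified Lean document; each statement's English description precedes it below -/
import Mathlib

section
/- Let g₁, g₂ : ℝ → ℝ be nondecreasing functions that are square-integrable with respect to the standard Gaussian measure γ on ℝ, and for ρ ∈ [−1,1] let c(ρ) = ∫∫ g₁(z₁) g₂(ρ z₁ + √(1−ρ²) z₂) dγ(z₁) dγ(z₂). Then c is continuous on the closed interval [−1,1]. (Continuity of the NORTA correlation-matching function, which together with its monotonicity justifies solving c(ρ_Z) = ρ_X by a numerical line search.) -/
/-!
Write `L_ρ z = ρ z₁ + √(1 - ρ²) z₂`, so that `c(ρ) = ∫ g₁(z₁) g₂(L_ρ z) d(γ ⊗ γ)`. For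
`ρ ∈ [-1, 1]` the map `L_ρ` pushes `γ ⊗ γ` forward to `γ`, so the functions `g₂ ∘ L_ρ` are
identically distributed, hence uniformly square-integrable. A monotone `g₂` is continuous off a
countable, hence `γ`-null, set, so `g₂ ∘ L_ρ → g₂ ∘ L_ρ₀` almost everywhere as `ρ → ρ₀`. Vitali's
convergence theorem upgrades this to convergence in `L²`, and Cauchy–Schwarz against `g₁ ∘ fst`
gives `c(ρ) → c(ρ₀)`.
-/

open MeasureTheory ProbabilityTheory Filter Topology
open scoped ENNReal

theorem measurePreserving_linearCombination_gaussianReal {a b : ℝ} (hab : a ^ 2 + b ^ 2 = 1) :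
    MeasurePreserving (fun z : ℝ × ℝ => a * z.1 + b * z.2)
      ((gaussianReal 0 1).prod (gaussianReal 0 1)) (gaussianReal 0 1) := by
  refine ⟨by fun_prop, ?_⟩
  have hcomp : (fun z : ℝ × ℝ => a * z.1 + b * z.2)
      = (fun z : ℝ × ℝ => z.1 + z.2) ∘ Prod.map (a * ·) (b * ·) := rfl
  rw [hcomp, ← Measure.map_map (by fun_prop) (by fun_prop),
    ← Measure.map_prod_map _ _ (by fun_prop) (by fun_prop), gaussianReal_map_const_mul,
    gaussianReal_map_const_mul]
  change gaussianReal _ _ ∗ gaussianReal _ _ = _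
  rw [gaussianReal_conv_gaussianReal]
  congr 1
  · simp
  · ext; simp [hab]

theorem Monotone.ae_continuousAt {μ : Measure ℝ} {g : ℝ → ℝ} (hμ : μ ≪ volume)
    (hg : Monotone g) : ∀ᵐ x ∂μ, ContinuousAt g x := by
  filter_upwards [hμ.ae_le (hg.countable_not_continuousAt.ae_notMem volume)] with x hx
  simpa using hx

theorem tendsto_integral_mul_of_tendsto_eLpNorm_two {α ι : Type*} [MeasurableSpace α]
    {μ : Measure α} {l : Filter ι} {g F : α → ℝ} {f : ι → α → ℝ}
    (hg : MemLp g 2 μ) (hf : ∀ i, MemLp (f i) 2 μ) (hF : MemLp F 2 μ)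
    (hlim : Tendsto (fun i => eLpNorm (f i - F) 2 μ) l (𝓝 0)) :
    Tendsto (fun i => ∫ x, g x * f i x ∂μ) l (𝓝 (∫ x, g x * F x ∂μ)) := by
  refine tendsto_integral_of_L1' _ (hg.integrable_mul hF).aestronglyMeasurable
    (Eventually.of_forall fun i => hg.integrable_mul (hf i)) ?_
  have hHolder : ∀ i, eLpNorm ((fun x => g x * f i x) - fun x => g x * F x) 1 μ
      ≤ eLpNorm g 2 μ * eLpNorm (f i - F) 2 μ := fun i => by
    have : ((fun x => g x * f i x) - fun x => g x * F x) = g • (f i - F) := by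
      ext x; simp [mul_sub]
    rw [this]
    exact eLpNorm_smul_le_mul_eLpNorm ((hf i).sub hF).1 hg.1
  have hbound := ENNReal.Tendsto.const_mul hlim (Or.inr hg.eLpNorm_ne_top)
  rw [mul_zero] at hbound
  exact tendsto_of_tendsto_of_tendsto_of_le_of_le tendsto_const_nhds hbound
    (fun _ => bot_le) hHolder

theorem tendsto_eLpNorm_sub_of_identDistrib {α E : Type*} [MeasurableSpace α] {μ : Measure α}
    [IsFiniteMeasure μ] [NormedAddCommGroup E] [MeasurableSpace E] [BorelSpace E]
    {p : ℝ≥0∞} (hp : 1 ≤ p) (hp' : p ≠ ∞) {f : ℕ → α → E} {F : α → E} (hF : MemLp F p μ)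
    (hident : ∀ n, IdentDistrib (f n) F μ μ)
    (hlim : ∀ᵐ x ∂μ, Tendsto (fun n => f n x) atTop (𝓝 (F x))) :
    Tendsto (fun n => eLpNorm (f n - F) p μ) atTop (𝓝 0) := by
  have hui : UniformIntegrable f p μ :=
    MemLp.uniformIntegrable_of_identDistrib (j := 0) hp hp' ((hident 0).memLp_iff.2 hF)
      fun n => (hident n).trans (hident 0).symm
  exact tendsto_Lp_finite_of_tendsto_ae hp hp'
    (fun n => (hident n).aestronglyMeasurable_iff.2 hF.1) hF hui.unifIntegrable hlim

theorem continuousOn_integral_mul_comp_of_measurePreserving {X α β : Type*}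
    [TopologicalSpace X] [FirstCountableTopology X] [MeasurableSpace α] [MeasurableSpace β]
    {μ : Measure α} [IsFiniteMeasure μ] {ν : Measure β} {g : α → ℝ} {h : β → ℝ}
    {T : X → α → β} {s : Set X} (hg : MemLp g 2 μ) (hh : MemLp h 2 ν)
    (hT : ∀ x ∈ s, MeasurePreserving (T x) μ ν)
    (hcont : ∀ x ∈ s, ∀ᵐ a ∂μ, ContinuousWithinAt (fun y => h (T y a)) s x) :
    ContinuousOn (fun x => ∫ a, g a * h (T x a) ∂μ) s := by
  rw [continuousOn_iff_continuous_domRestrict, continuous_iff_seqContinuous]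
  intro u x₀ hu
  have hident : ∀ x ∈ s, IdentDistrib (h ∘ T x) (h ∘ T x₀) μ μ := fun x hx =>
    IdentDistrib.comp_of_aemeasurable
      ⟨(hT x hx).aemeasurable, (hT x₀ x₀.2).aemeasurable,
        by rw [(hT x hx).map_eq, (hT x₀ x₀.2).map_eq]⟩
      (by rw [(hT x hx).map_eq]; exact hh.aemeasurable)
  refine tendsto_integral_mul_of_tendsto_eLpNorm_two hg
    (fun n => hh.comp_measurePreserving (hT _ (u n).2))
    (hh.comp_measurePreserving (hT _ x₀.2)) ?_
  refine tendsto_eLpNorm_sub_of_identDistrib one_le_two ENNReal.ofNat_ne_top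
    (hh.comp_measurePreserving (hT _ x₀.2)) (fun n => hident _ (u n).2) ?_
  have hu_within : Tendsto (fun n => (u n : X)) atTop (𝓝[s] x₀) :=
    tendsto_nhdsWithin_iff.2
      ⟨(continuous_subtype_val.tendsto x₀).comp hu, Eventually.of_forall fun n => (u n).2⟩
  filter_upwards [hcont x₀ x₀.2] with a ha
  exact ha.tendsto.comp hu_within

theorem norta_matching_continuous_general (g₁ g₂ : ℝ → ℝ)
    (hg₂ : Monotone g₂)
    (hg₁L2 : MemLp g₁ 2 (gaussianReal 0 1)) (hg₂L2 : MemLp g₂ 2 (gaussianReal 0 1)) :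
    ContinuousOn (fun ρ : ℝ =>
        ∫ z₁, ∫ z₂, g₁ z₁ * g₂ (ρ * z₁ + Real.sqrt (1 - ρ ^ 2) * z₂)
          ∂(gaussianReal 0 1) ∂(gaussianReal 0 1))
      (Set.Icc (-1 : ℝ) 1) := by
  set γ := gaussianReal 0 1
  have hT : ∀ ρ ∈ Set.Icc (-1 : ℝ) 1,
      MeasurePreserving (fun z : ℝ × ℝ => ρ * z.1 + √(1 - ρ ^ 2) * z.2) (γ.prod γ) γ :=
    fun ρ hρ => measurePreserving_linearCombination_gaussianReal <| by
      rw [Real.sq_sqrt (by nlinarith [hρ.1, hρ.2])]; ring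
  have hg₁fst : MemLp (fun z : ℝ × ℝ => g₁ z.1) 2 (γ.prod γ) :=
    hg₁L2.comp_measurePreserving measurePreserving_fst
  have hcont : ∀ ρ₀ ∈ Set.Icc (-1 : ℝ) 1, ∀ᵐ z ∂(γ.prod γ),
      ContinuousWithinAt (fun ρ => g₂ (ρ * z.1 + √(1 - ρ ^ 2) * z.2)) (Set.Icc (-1) 1) ρ₀ :=
    fun ρ₀ hρ₀ => by
      filter_upwards [(hT ρ₀ hρ₀).quasiMeasurePreserving.ae
        (hg₂.ae_continuousAt (gaussianReal_absolutelyContinuous 0 one_ne_zero))] with z hz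
      exact (ContinuousAt.comp (f := fun ρ : ℝ => ρ * z.1 + √(1 - ρ ^ 2) * z.2) hz
        (by fun_prop)).continuousWithinAt
  refine (continuousOn_integral_mul_comp_of_measurePreserving hg₁fst hg₂L2 hT hcont).congr
    fun ρ hρ => ?_
  exact integral_integral (hg₁fst.integrable_mul (hg₂L2.comp_measurePreserving (hT ρ hρ)))

/-- Continuity of the NORTA correlation-matching function: if `g₁, g₂` are nondecreasing and
square-integrable with respect to the standard Gaussian measure `γ`, then
`c(ρ) = ∫∫ g₁(z₁) g₂(ρ z₁ + √(1-ρ²) z₂) dγ(z₁) dγ(z₂)` is continuous on `[-1, 1]`. -/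
theorem norta_matching_continuous (g₁ g₂ : ℝ → ℝ)
    (hg₁ : Monotone g₁) (hg₂ : Monotone g₂)
    (hg₁L2 : MemLp g₁ 2 (gaussianReal 0 1)) (hg₂L2 : MemLp g₂ 2 (gaussianReal 0 1)) :
    ContinuousOn (fun ρ : ℝ =>
        ∫ z₁, ∫ z₂, g₁ z₁ * g₂ (ρ * z₁ + Real.sqrt (1 - ρ ^ 2) * z₂)
          ∂(gaussianReal 0 1) ∂(gaussianReal 0 1))
      (Set.Icc (-1 : ℝ) 1) :=
  norta_matching_continuous_general g₁ g₂ hg₂ hg₁L2 hg₂L2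
end

section
/- Let g₁, g₂ : ℝ → ℝ be nondecreasing and square-integrable with respect to the standard Gaussian measure γ, and let c(ρ) = ∫∫ g₁(z₁) g₂(ρ z₁ + √(1−ρ²) z₂) dγ(z₁) dγ(z₂) for ρ ∈ [−1,1]. Then for every target value r with c(−1) ≤ r ≤ c(1) there exists ρ ∈ [−1,1] such that c(ρ) = r. (Solvability of the NORTA correlation-matching equation c_{ij}[ρ_Z(i,j)] = ρ_X(i,j) for any attainable target correlation, guaranteeing the line search terminates with an exact match.) -/
/-!
For `ρ ∈ [-1, 1]` the map `(z₁, z₂) ↦ ρ z₁ + √(1 - ρ²) z₂` pushes `γ ⊗ γ` forward to `γ`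
(convolution of Gaussians). Hence, by Cauchy–Schwarz, replacing `g₂` by `h` changes `c(ρ)` by at
most `‖g₁‖₂ ‖g₂ - h‖₂`, uniformly in `ρ`. For bounded continuous `h` the function
`ρ ↦ E[g₁(Z₁) h(ρ Z₁ + √(1 - ρ²) Z₂)]` is continuous by dominated convergence, and such `h` are
dense in `L²(γ)`; so `c` is a uniform limit of continuous functions on `[-1, 1]`, hence
continuous, and the intermediate value theorem gives the claim.
-/

open MeasureTheory ProbabilityTheory NNReal Set Filter Topology BoundedContinuousFunction

local notation "γ" => gaussianReal 0 1

noncomputable def correlated (ρ : ℝ) (p : ℝ × ℝ) : ℝ := ρ * p.1 + √(1 - ρ ^ 2) * p.2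

noncomputable def correlatedMoment (f g : ℝ → ℝ) (ρ : ℝ) : ℝ :=
  ∫ p, f p.1 * g (correlated ρ p) ∂(Measure.prod γ γ)

lemma gaussianReal_prod_map_linear (a b m₁ m₂ : ℝ) (v₁ v₂ : ℝ≥0) :
    ((gaussianReal m₁ v₁).prod (gaussianReal m₂ v₂)).map (fun p : ℝ × ℝ => a * p.1 + b * p.2)
      = gaussianReal (a * m₁ + b * m₂)
          (⟨a ^ 2, sq_nonneg a⟩ * v₁ + ⟨b ^ 2, sq_nonneg b⟩ * v₂) := by
  have hsplit : (fun p : ℝ × ℝ => a * p.1 + b * p.2)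
      = (fun q : ℝ × ℝ => q.1 + q.2) ∘ Prod.map (a * ·) (b * ·) := rfl
  rw [hsplit, ← Measure.map_map (by fun_prop) (by fun_prop),
    ← Measure.map_prod_map _ _ (by fun_prop) (by fun_prop), gaussianReal_map_const_mul,
    gaussianReal_map_const_mul]
  exact gaussianReal_conv_gaussianReal

lemma measurePreserving_correlated {ρ : ℝ} (hρ : ρ ∈ Icc (-1 : ℝ) 1) :
    MeasurePreserving (correlated ρ) (Measure.prod γ γ) γ := by
  refine ⟨by unfold correlated; fun_prop, ?_⟩
  have hmap := gaussianReal_prod_map_linear ρ √(1 - ρ ^ 2) 0 0 1 1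
  convert hmap using 2
  · rfl
  · simp
  · refine NNReal.eq ?_
    change (1 : ℝ) = ρ ^ 2 * 1 + √(1 - ρ ^ 2) ^ 2 * 1
    rw [Real.sq_sqrt (by nlinarith [hρ.1, hρ.2])]
    ring

lemma abs_integral_mul_le_eLpNorm_mul_eLpNorm {α : Type*} [MeasurableSpace α] {μ : Measure α}
    {f g : α → ℝ} (hf : MemLp f 2 μ) (hg : MemLp g 2 μ) :
    |∫ x, f x * g x ∂μ| ≤ (eLpNorm f 2 μ).toReal * (eLpNorm g 2 μ).toReal := by
  have hinner : inner ℝ (hf.toLp f) (hg.toLp g) = ∫ x, f x * g x ∂μ := by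
    rw [L2.inner_def]
    refine integral_congr_ae ?_
    filter_upwards [hf.coeFn_toLp, hg.coeFn_toLp] with x hfx hgx
    simp [hfx, hgx, mul_comm]
  rw [← hinner, ← Lp.norm_toLp f hf, ← Lp.norm_toLp g hg]
  exact abs_real_inner_le_norm _ _

section

variable {f g h : ℝ → ℝ}

lemma integrable_mul_comp_correlated (hf : MemLp f 2 γ) (hg : MemLp g 2 γ) {ρ : ℝ}
    (hρ : ρ ∈ Icc (-1 : ℝ) 1) :
    Integrable (fun p => f p.1 * g (correlated ρ p)) (Measure.prod γ γ) :=
  (hf.comp_measurePreserving (measurePreserving_fst (μ := γ) (ν := γ))).integrable_mul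
    (hg.comp_measurePreserving (measurePreserving_correlated hρ))

lemma continuous_correlatedMoment_of_bounded (hf : Integrable f γ) (b : ℝ →ᵇ ℝ) :
    Continuous (correlatedMoment f b) := by
  have hf₁ : Integrable (fun p : ℝ × ℝ => f p.1) (Measure.prod γ γ) :=
    (measurePreserving_fst (μ := γ) (ν := γ)).integrable_comp_of_integrable hf
  refine continuous_of_dominated (bound := fun p => ‖b‖ * ‖f p.1‖) (fun ρ => ?_)
    (fun ρ => .of_forall fun p => ?_) (hf₁.norm.const_mul _) (.of_forall fun p => ?_)
  · exact hf₁.1.mul (b.continuous.comp_aestronglyMeasurable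
      (by unfold correlated; fun_prop : Measurable (correlated ρ)).aestronglyMeasurable)
  · rw [norm_mul, mul_comm]
    exact mul_le_mul_of_nonneg_right (b.norm_coe_le_norm _) (norm_nonneg _)
  · unfold correlated
    fun_prop

lemma abs_correlatedMoment_sub_le (hf : MemLp f 2 γ) (hg : MemLp g 2 γ) (hh : MemLp h 2 γ)
    {ρ : ℝ} (hρ : ρ ∈ Icc (-1 : ℝ) 1) :
    |correlatedMoment f g ρ - correlatedMoment f h ρ|
      ≤ (eLpNorm f 2 γ).toReal * (eLpNorm (g - h) 2 γ).toReal := by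
  have hfst := measurePreserving_fst (μ := γ) (ν := γ)
  have hW := measurePreserving_correlated hρ
  have hdiff : correlatedMoment f g ρ - correlatedMoment f h ρ
      = ∫ p, f p.1 * (g - h) (correlated ρ p) ∂(Measure.prod γ γ) := by
    rw [correlatedMoment, correlatedMoment, ← integral_sub
      (integrable_mul_comp_correlated hf hg hρ) (integrable_mul_comp_correlated hf hh hρ)]
    simp only [Pi.sub_apply, mul_sub]
  rw [hdiff, ← eLpNorm_comp_measurePreserving hf.1 hfst,
    ← eLpNorm_comp_measurePreserving (hg.sub hh).1 hW]
  exact abs_integral_mul_le_eLpNorm_mul_eLpNorm (hf.comp_measurePreserving hfst)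
    ((hg.sub hh).comp_measurePreserving hW)

lemma continuousOn_correlatedMoment (hf : MemLp f 2 γ) (hg : MemLp g 2 γ) :
    ContinuousOn (correlatedMoment f g) (Icc (-1) 1) := by
  have happrox (n : ℕ) : ∃ h : ℝ →ᵇ ℝ,
      eLpNorm (g - ⇑h) 2 γ ≤ ENNReal.ofReal (1 / (n + 1)) ∧ MemLp h 2 γ :=
    hg.exists_boundedContinuous_eLpNorm_sub_le ENNReal.ofNat_ne_top (by simp; positivity)
  choose h hgh hh using happrox
  have hbound : Tendsto (fun n : ℕ => (eLpNorm f 2 γ).toReal * (1 / (n + 1))) atTop (𝓝 0) := by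
    simpa using tendsto_one_div_add_atTop_nhds_zero_nat.const_mul (eLpNorm f 2 γ).toReal
  have hunif : TendstoUniformlyOn (fun n => correlatedMoment f (h n)) (correlatedMoment f g)
      atTop (Icc (-1) 1) := by
    rw [Metric.tendstoUniformlyOn_iff]
    intro ε hε
    filter_upwards [hbound.eventually_lt_const hε] with n hn ρ hρ
    calc dist (correlatedMoment f g ρ) (correlatedMoment f (h n) ρ)
        ≤ (eLpNorm f 2 γ).toReal * (eLpNorm (g - ⇑(h n)) 2 γ).toReal :=
          abs_correlatedMoment_sub_le hf hg (hh n) hρ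
      _ ≤ (eLpNorm f 2 γ).toReal * (1 / (n + 1)) := by
          gcongr
          exact ENNReal.toReal_le_of_le_ofReal (by positivity) (hgh n)
      _ < ε := hn
  exact hunif.continuousOn (.of_forall fun n =>
    (continuous_correlatedMoment_of_bounded (hf.integrable one_le_two) (h n)).continuousOn)

end

theorem norta_matching_surjective_general (g₁ g₂ : ℝ → ℝ)
    (hg₁L2 : MemLp g₁ 2 (gaussianReal 0 1)) (hg₂L2 : MemLp g₂ 2 (gaussianReal 0 1))
    (c : ℝ → ℝ)
    (hc : c = fun ρ : ℝ =>
        ∫ z₁, ∫ z₂, g₁ z₁ * g₂ (ρ * z₁ + Real.sqrt (1 - ρ ^ 2) * z₂)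
          ∂(gaussianReal 0 1) ∂(gaussianReal 0 1))
    (r : ℝ) (hr₁ : c (-1) ≤ r) (hr₂ : r ≤ c 1) :
    ∃ ρ ∈ Set.Icc (-1 : ℝ) 1, c ρ = r := by
  have hc_eq : EqOn c (correlatedMoment g₁ g₂) (Icc (-1) 1) := fun ρ hρ => by
    rw [hc]
    exact integral_integral (integrable_mul_comp_correlated hg₁L2 hg₂L2 hρ)
  exact intermediate_value_Icc (by norm_num)
    ((continuousOn_correlatedMoment hg₁L2 hg₂L2).congr hc_eq) ⟨hr₁, hr₂⟩

/-- Solvability of the NORTA correlation-matching equation: for `g₁, g₂` nondecreasing and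
square-integrable with respect to the standard Gaussian measure, and any target `r` with
`c(-1) ≤ r ≤ c(1)`, there exists `ρ ∈ [-1, 1]` with `c(ρ) = r`. -/
theorem norta_matching_surjective (g₁ g₂ : ℝ → ℝ)
    (hg₁ : Monotone g₁) (hg₂ : Monotone g₂)
    (hg₁L2 : MemLp g₁ 2 (gaussianReal 0 1)) (hg₂L2 : MemLp g₂ 2 (gaussianReal 0 1))
    (c : ℝ → ℝ)
    (hc : c = fun ρ : ℝ =>
        ∫ z₁, ∫ z₂, g₁ z₁ * g₂ (ρ * z₁ + Real.sqrt (1 - ρ ^ 2) * z₂)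
          ∂(gaussianReal 0 1) ∂(gaussianReal 0 1))
    (r : ℝ) (hr₁ : c (-1) ≤ r) (hr₂ : r ≤ c 1) :
    ∃ ρ ∈ Set.Icc (-1 : ℝ) 1, c ρ = r :=
  norta_matching_surjective_general g₁ g₂ hg₁L2 hg₂L2 c hc r hr₁ hr₂
end

section
/- Let A be a real symmetric n×n matrix with spectral decomposition A = Σᵢ λᵢ uᵢuᵢᵀ, where {uᵢ} is an orthonormal basis of eigenvectors with eigenvalues λᵢ. Define A₊ = Σᵢ max(λᵢ, 0) uᵢuᵢᵀ. Then A₊ is positive semidefinite and for every positive semidefinite matrix X one has ‖A − A₊‖_F ≤ ‖A − X‖_F; that is, truncating the negative eigenvalues of A yields a closest positive semidefinite matrix to A in Frobenius norm. -/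
/-!
Write `U` for the orthogonal matrix with rows `uᵢ`, so that `A = Uᵀ diag(λ) U`, the truncation is
`Uᵀ diag(max(λ, 0)) U`, and every positive semidefinite `X` is `Uᵀ Y U` with `Y` positive
semidefinite. Conjugation by `U` preserves the Frobenius norm, so it suffices to compare
`diag(λ) - diag(max(λ, 0))` with `diag(λ) - Y`. Dropping the off-diagonal entries of the latter
leaves `∑ᵢ (λᵢ - Yᵢᵢ)²`, and since `Yᵢᵢ ≥ 0` each term is at least `(λᵢ - max(λᵢ, 0))²`.
-/

open Matrix

noncomputable def frobNorm {n : ℕ} (B : Matrix (Fin n) (Fin n) ℝ) : ℝ :=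
  Real.sqrt (∑ i, ∑ j, (B i j) ^ 2)

lemma Matrix.sum_smul_vecMulVec_eq_transpose_mul_diagonal_mul {m n R : Type*} [Fintype m]
    [DecidableEq m] [CommSemiring R] (u : m → n → R) (d : m → R) :
    ∑ i, d i • vecMulVec (u i) (u i) = (of u)ᵀ * diagonal d * of u := by
  ext a b
  simp only [sum_apply, smul_apply, vecMulVec_apply, smul_eq_mul, mul_apply, transpose_apply,
    of_apply, diagonal_apply, mul_ite, mul_zero, Finset.sum_ite_eq', Finset.mem_univ, if_true]
  exact Finset.sum_congr rfl fun i _ => by ring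

lemma Matrix.of_mul_transpose_eq_one_of_orthonormal {ι R : Type*} [Fintype ι] [DecidableEq ι]
    [CommSemiring R] {u : ι → ι → R} (h : ∀ i j, u i ⬝ᵥ u j = if i = j then 1 else 0) :
    of u * (of u)ᵀ = 1 := by
  ext i j
  simpa [mul_apply, one_apply, dotProduct] using h i j

section SumSq

variable {ι : Type*} [Fintype ι]

lemma Matrix.sum_sq_entries_eq_trace_transpose_mul (M : Matrix ι ι ℝ) :
    ∑ i, ∑ j, M i j ^ 2 = (Mᵀ * M).trace := by
  simp only [trace, diag, mul_apply, transpose_apply, sq]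
  exact Finset.sum_comm

lemma Matrix.sum_sq_entries_transpose_mul_mul [DecidableEq ι] {U : Matrix ι ι ℝ}
    (hU : U * Uᵀ = 1) (M : Matrix ι ι ℝ) :
    ∑ i, ∑ j, (Uᵀ * M * U) i j ^ 2 = ∑ i, ∑ j, M i j ^ 2 := by
  simp only [sum_sq_entries_eq_trace_transpose_mul, transpose_mul, transpose_transpose,
    Matrix.mul_assoc]
  rw [← Matrix.mul_assoc U, hU, Matrix.one_mul, trace_mul_comm, Matrix.mul_assoc,
    Matrix.mul_assoc, hU, Matrix.mul_one]

lemma Matrix.sum_sq_diag_le_sum_sq_entries (M : Matrix ι ι ℝ) :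
    ∑ i, M i i ^ 2 ≤ ∑ i, ∑ j, M i j ^ 2 :=
  Finset.sum_le_sum fun i _ =>
    Finset.single_le_sum (f := fun j => M i j ^ 2) (fun _ _ => sq_nonneg _) (Finset.mem_univ i)

lemma Matrix.sum_sq_entries_diagonal [DecidableEq ι] (d : ι → ℝ) :
    ∑ i, ∑ j, diagonal d i j ^ 2 = ∑ i, d i ^ 2 := by
  simp [diagonal_apply, apply_ite (· ^ 2)]

end SumSq

lemma sq_sub_max_zero_le_sq_sub {a y : ℝ} (hy : 0 ≤ y) : (a - max a 0) ^ 2 ≤ (a - y) ^ 2 := by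
  rcases le_total a 0 with ha | ha
  · rw [max_eq_right ha]
    nlinarith
  · rw [max_eq_left ha, sub_self, sq, zero_mul]
    exact sq_nonneg _

lemma Matrix.sum_sq_sub_max_zero_le_sum_sq_diagonal_sub {ι : Type*} [Fintype ι] [DecidableEq ι]
    (d : ι → ℝ) {Y : Matrix ι ι ℝ} (hY : Y.PosSemidef) :
    ∑ i, (d i - max (d i) 0) ^ 2 ≤ ∑ i, ∑ j, (diagonal d - Y) i j ^ 2 :=
  calc ∑ i, (d i - max (d i) 0) ^ 2
      ≤ ∑ i, (diagonal d - Y) i i ^ 2 :=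
        Finset.sum_le_sum fun i _ => by
          simpa using sq_sub_max_zero_le_sq_sub (a := d i) hY.diag_nonneg
    _ ≤ ∑ i, ∑ j, (diagonal d - Y) i j ^ 2 := sum_sq_diag_le_sum_sq_entries _

/-- Truncating the negative eigenvalues of a symmetric matrix yields a closest positive
semidefinite matrix in Frobenius norm: if `A = Σᵢ λᵢ uᵢuᵢᵀ` with `{uᵢ}` orthonormal and
`A₊ = Σᵢ max(λᵢ, 0) uᵢuᵢᵀ`, then `A₊` is positive semidefinite and
`‖A - A₊‖_F ≤ ‖A - X‖_F` for every positive semidefinite `X`. -/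
theorem eigenvalue_truncation_closest_psd {n : ℕ}
    (A : Matrix (Fin n) (Fin n) ℝ)
    (u : Fin n → (Fin n → ℝ)) (lam : Fin n → ℝ)
    (hortho : ∀ i j : Fin n, dotProduct (u i) (u j) = if i = j then 1 else 0)
    (hA : A = ∑ i, lam i • vecMulVec (u i) (u i)) :
    (∑ i, max (lam i) 0 • vecMulVec (u i) (u i)).PosSemidef ∧
    ∀ X : Matrix (Fin n) (Fin n) ℝ, X.PosSemidef →
      frobNorm (A - ∑ i, max (lam i) 0 • vecMulVec (u i) (u i)) ≤ frobNorm (A - X) := by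
  set U := of u
  have hU : U * Uᵀ = 1 := of_mul_transpose_eq_one_of_orthonormal hortho
  simp only [sum_smul_vecMulVec_eq_transpose_mul_diagonal_mul] at hA ⊢
  refine ⟨?_, fun X hX => ?_⟩
  · have hD : (diagonal fun i => max (lam i) 0).PosSemidef :=
      posSemidef_diagonal_iff.mpr fun i => le_max_right (lam i) 0
    simpa using hD.conjTranspose_mul_mul_same U
  set Y := U * X * Uᵀ
  have hY : Y.PosSemidef := by simpa using hX.mul_mul_conjTranspose_same U
  have hXY : X = Uᵀ * Y * U := by
    simp only [Y, ← Matrix.mul_assoc, mul_eq_one_comm.mp hU, Matrix.one_mul]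
    rw [Matrix.mul_assoc, mul_eq_one_comm.mp hU, Matrix.mul_one]
  have hAX : A - X = Uᵀ * (diagonal lam - Y) * U := by
    rw [hA, hXY, Matrix.mul_sub, Matrix.sub_mul]
  have hAA : A - Uᵀ * diagonal (fun i => max (lam i) 0) * U
      = Uᵀ * diagonal (fun i => lam i - max (lam i) 0) * U := by
    rw [hA, ← Matrix.sub_mul, ← Matrix.mul_sub, diagonal_sub]
  unfold frobNorm
  rw [hAX, hAA, sum_sq_entries_transpose_mul_mul hU, sum_sq_entries_transpose_mul_mul hU,
    sum_sq_entries_diagonal]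
  exact Real.sqrt_le_sqrt (sum_sq_sub_max_zero_le_sum_sq_diagonal_sub lam hY)
end

section
/- Let π be a probability measure on ℝ × ℝ whose first and second marginals μ and ν each have finite second moments. Then ∫ x·y dπ(x,y) ≤ ∫₀¹ Q_μ(u) Q_ν(u) du, where Q_μ and Q_ν are the quantile functions of μ and ν; i.e., among all joint distributions with given marginals, the comonotone coupling (Q_μ(U), Q_ν(U)) with U uniform on (0,1) maximizes the expected product, and hence maximizes the correlation. (Upper Fréchet–Hoeffding bound: this identifies c(1) as the largest correlation attainable by the NORTA model for given marginals.) -/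
/-!
Hoeffding's identity `x y = ∫∫ K(x,s) K(y,t) ds dt` with `K(x,s) = 1{s<x} - 1{s<0}` turns, after
Fubini, `∫ x y dπ` into an integral over `(s,t)` of `π((s,∞) × (t,∞))` plus terms that depend
only on the marginals. Any coupling gives the upper quadrant `(s,∞) × (t,∞)` mass at most
`min(μ(s,∞), ν(t,∞))`, and the comonotone coupling `(Q_μ(U), Q_ν(U))` attains this bound:
since `Q_μ(u) > s ↔ u > F_μ(s)`, both events are upper subintervals of `(0,1)`, hence nested.
-/

open MeasureTheory ProbabilityTheory

/-- The quantile function (generalized inverse cdf) of a measure `μ` on `ℝ`: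
`Q_μ(p) = inf {x : F_μ(x) ≥ p}`. -/
noncomputable def quantile (μ : Measure ℝ) (p : ℝ) : ℝ :=
  sInf {x : ℝ | p ≤ cdf μ x}

open Set Filter Topology

section Quantile

variable {μ : Measure ℝ} {p x : ℝ}

lemma bddBelow_setOf_le_cdf (hp : 0 < p) : BddBelow {x | p ≤ cdf μ x} := by
  obtain ⟨z, hz⟩ := ((tendsto_cdf_atBot μ).eventually_lt_const hp).exists
  exact ⟨z, fun y hy => le_of_not_gt fun hyz => (hy.trans (monotone_cdf μ hyz.le)).not_gt hz⟩

lemma nonempty_setOf_le_cdf (hp : p < 1) : {x | p ≤ cdf μ x}.Nonempty :=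
  (((tendsto_cdf_atTop μ).eventually_const_lt hp).exists).imp fun _ => le_of_lt

lemma le_cdf_quantile (hp : p < 1) : p ≤ cdf μ (quantile μ p) := by
  have hcont : Tendsto (cdf μ) (𝓝[>] (quantile μ p)) (𝓝 (cdf μ (quantile μ p))) :=
    ((cdf μ).right_continuous _).mono_left (nhdsWithin_mono _ Ioi_subset_Ici_self)
  refine ge_of_tendsto hcont ?_
  filter_upwards [self_mem_nhdsWithin] with y hy
  obtain ⟨z, hz, hzy⟩ := exists_lt_of_csInf_lt (nonempty_setOf_le_cdf hp) hy
  exact hz.trans (monotone_cdf μ hzy.le)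

lemma quantile_le_iff (hp : p ∈ Ioo 0 1) : quantile μ p ≤ x ↔ p ≤ cdf μ x :=
  ⟨fun h => (le_cdf_quantile hp.2).trans (monotone_cdf μ h),
    fun h => csInf_le (bddBelow_setOf_le_cdf hp.1) h⟩

lemma lt_quantile_iff (hp : p ∈ Ioo 0 1) : x < quantile μ p ↔ cdf μ x < p := by
  simpa only [not_le] using (quantile_le_iff hp).not

lemma monotoneOn_quantile : MonotoneOn (quantile μ) (Ioo 0 1) :=
  fun _ hp _ hq hpq => (quantile_le_iff hp).2 (hpq.trans (le_cdf_quantile hq.2))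

lemma preimage_quantile_Ioi_inter_Ioo (x : ℝ) :
    quantile μ ⁻¹' Ioi x ∩ Ioo 0 1 = Ioo (cdf μ x) 1 := by
  ext u
  refine ⟨fun ⟨hx, hu⟩ => ⟨(lt_quantile_iff hu).1 hx, hu.2⟩, fun hu => ?_⟩
  have hu' : u ∈ Ioo 0 1 := ⟨(cdf_nonneg μ x).trans_lt hu.1, hu.2⟩
  exact ⟨(lt_quantile_iff hu').2 hu.1, hu'⟩

lemma volume_Ioo_cdf [IsProbabilityMeasure μ] (x : ℝ) : volume (Ioo (cdf μ x) 1) = μ (Ioi x) := by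
  rw [Real.volume_Ioo, ← (cdf μ).measure_Ioi (tendsto_cdf_atTop μ), measure_cdf]

end Quantile

instance : IsProbabilityMeasure (volume.restrict (Ioo (0 : ℝ) 1)) :=
  ⟨by simp [Real.volume_Ioo]⟩

lemma aemeasurable_quantile (μ : Measure ℝ) [IsProbabilityMeasure μ] :
    AEMeasurable (quantile μ) (volume.restrict (Ioo 0 1)) :=
  aemeasurable_restrict_of_monotoneOn measurableSet_Ioo monotoneOn_quantile

lemma map_quantile_volume_Ioo (μ : Measure ℝ) [IsProbabilityMeasure μ] :
    (volume.restrict (Ioo 0 1)).map (quantile μ) = μ := by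
  have hIoi (x : ℝ) : (volume.restrict (Ioo 0 1)).map (quantile μ) (Ioi x) = μ (Ioi x) := by
    rw [Measure.map_apply_of_aemeasurable (aemeasurable_quantile μ) measurableSet_Ioi,
      Measure.restrict_apply' measurableSet_Ioo, preimage_quantile_Ioi_inter_Ioo, volume_Ioo_cdf]
  have : IsProbabilityMeasure ((volume.restrict (Ioo 0 1)).map (quantile μ)) :=
    Measure.isProbabilityMeasure_map (aemeasurable_quantile μ)
  refine Measure.ext_of_Iic _ _ fun x => ?_
  rw [← compl_Ioi, prob_compl_eq_one_sub measurableSet_Ioi, prob_compl_eq_one_sub measurableSet_Ioi,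
    hIoi]

noncomputable def comonotoneCoupling (μ ν : Measure ℝ) : Measure (ℝ × ℝ) :=
  (volume.restrict (Ioo 0 1)).map fun u => (quantile μ u, quantile ν u)

section Coupling

variable (μ ν : Measure ℝ) [IsProbabilityMeasure μ] [IsProbabilityMeasure ν]

lemma aemeasurable_quantile_prod_quantile :
    AEMeasurable (fun u => (quantile μ u, quantile ν u)) (volume.restrict (Ioo 0 1)) :=
  (aemeasurable_quantile μ).prodMk (aemeasurable_quantile ν)

instance : IsProbabilityMeasure (comonotoneCoupling μ ν) :=
  Measure.isProbabilityMeasure_map (aemeasurable_quantile_prod_quantile μ ν)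

lemma comonotoneCoupling_map_fst : (comonotoneCoupling μ ν).map Prod.fst = μ := by
  rw [comonotoneCoupling, AEMeasurable.map_map_of_aemeasurable measurable_fst.aemeasurable
    (aemeasurable_quantile_prod_quantile μ ν)]
  exact map_quantile_volume_Ioo μ

lemma comonotoneCoupling_map_snd : (comonotoneCoupling μ ν).map Prod.snd = ν := by
  rw [comonotoneCoupling, AEMeasurable.map_map_of_aemeasurable measurable_snd.aemeasurable
    (aemeasurable_quantile_prod_quantile μ ν)]
  exact map_quantile_volume_Ioo ν

lemma comonotoneCoupling_Ioi_prod_Ioi (s t : ℝ) :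
    comonotoneCoupling μ ν (Ioi s ×ˢ Ioi t) = min (μ (Ioi s)) (ν (Ioi t)) := by
  have hpre : (fun u => (quantile μ u, quantile ν u)) ⁻¹' (Ioi s ×ˢ Ioi t) ∩ Ioo 0 1
      = Ioo (cdf μ s) 1 ∩ Ioo (cdf ν t) 1 := by
    rw [← preimage_quantile_Ioi_inter_Ioo, ← preimage_quantile_Ioi_inter_Ioo,
      inter_inter_inter_comm, inter_self]
    rfl
  have hanti : Antitone fun a : ℝ => volume (Ioo a 1) :=
    fun _ _ h => measure_mono (Ioo_subset_Ioo_left h)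
  rw [comonotoneCoupling, Measure.map_apply_of_aemeasurable
    (aemeasurable_quantile_prod_quantile μ ν) (measurableSet_Ioi.prod measurableSet_Ioi),
    Measure.restrict_apply' measurableSet_Ioo, hpre, Ioo_inter_Ioo, min_self,
    hanti.map_max, volume_Ioo_cdf, volume_Ioo_cdf]

lemma integral_comonotoneCoupling_mul :
    ∫ p, p.1 * p.2 ∂comonotoneCoupling μ ν = ∫ u in Ioo 0 1, quantile μ u * quantile ν u :=
  integral_map (aemeasurable_quantile_prod_quantile μ ν)
    (measurable_fst.mul measurable_snd).aestronglyMeasurable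

end Coupling

lemma measure_Ioi_prod_Ioi_le_min (ρ : Measure (ℝ × ℝ)) (s t : ℝ) :
    ρ (Ioi s ×ˢ Ioi t) ≤ min (ρ.map Prod.fst (Ioi s)) (ρ.map Prod.snd (Ioi t)) := by
  rw [Measure.map_apply measurable_fst measurableSet_Ioi,
    Measure.map_apply measurable_snd measurableSet_Ioi]
  exact le_min (measure_mono (prod_subset_preimage_fst _ _))
    (measure_mono (prod_subset_preimage_snd _ _))

noncomputable def hoeffdingKernel (x s : ℝ) : ℝ := (Iio x).indicator 1 s - (Iio 0).indicator 1 s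

lemma hoeffdingKernel_eq (x s : ℝ) :
    hoeffdingKernel x s = (Ico 0 x).indicator 1 s - (Ico x 0).indicator 1 s := by
  simp only [hoeffdingKernel, indicator_apply, mem_Iio, mem_Ico, Pi.one_apply]
  grind

lemma abs_hoeffdingKernel (x s : ℝ) :
    |hoeffdingKernel x s| = (Ico 0 x).indicator 1 s + (Ico x 0).indicator 1 s := by
  simp only [hoeffdingKernel, indicator_apply, mem_Iio, mem_Ico, Pi.one_apply]
  split_ifs <;> grind

lemma integrable_indicator_one_Ico (a b : ℝ) : Integrable ((Ico a b).indicator (1 : ℝ → ℝ)) :=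
  (integrableOn_const measure_Ico_lt_top.ne).integrable_indicator measurableSet_Ico

lemma integrable_hoeffdingKernel (x : ℝ) : Integrable (hoeffdingKernel x) := by
  simp only [funext (hoeffdingKernel_eq x)]
  exact (integrable_indicator_one_Ico 0 x).sub (integrable_indicator_one_Ico x 0)

lemma integral_hoeffdingKernel (x : ℝ) : ∫ s, hoeffdingKernel x s = x := by
  simp only [hoeffdingKernel_eq]
  rw [integral_sub (integrable_indicator_one_Ico 0 x) (integrable_indicator_one_Ico x 0),
    integral_indicator_one measurableSet_Ico, integral_indicator_one measurableSet_Ico,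
    Real.volume_real_Ico, Real.volume_real_Ico, sub_zero, zero_sub,
    max_zero_sub_max_neg_zero_eq_self]

lemma integral_abs_hoeffdingKernel (x : ℝ) : ∫ s, |hoeffdingKernel x s| = |x| := by
  simp only [abs_hoeffdingKernel]
  rw [integral_add (integrable_indicator_one_Ico 0 x) (integrable_indicator_one_Ico x 0),
    integral_indicator_one measurableSet_Ico, integral_indicator_one measurableSet_Ico,
    Real.volume_real_Ico, Real.volume_real_Ico, sub_zero, zero_sub]
  rcases le_total 0 x with h | h <;> simp [h, abs_of_nonneg, abs_of_nonpos]

lemma measurable_hoeffdingKernel : Measurable (Function.uncurry hoeffdingKernel) :=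
  (measurable_const.indicator (measurableSet_lt measurable_snd measurable_fst)).sub
    ((measurable_const.indicator measurableSet_Iio).comp measurable_snd)

lemma integrable_hoeffdingKernel_mul_prod (ρ : Measure (ℝ × ℝ)) [SFinite ρ]
    (hρ : Integrable (fun p => p.1 * p.2) ρ) :
    Integrable
      (fun z : (ℝ × ℝ) × (ℝ × ℝ) => hoeffdingKernel z.1.1 z.2.1 * hoeffdingKernel z.1.2 z.2.2)
      (ρ.prod (volume.prod volume)) := by
  have hmeas : Measurable fun z : (ℝ × ℝ) × (ℝ × ℝ) =>
      hoeffdingKernel z.1.1 z.2.1 * hoeffdingKernel z.1.2 z.2.2 :=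
    (measurable_hoeffdingKernel.comp (measurable_fst.fst.prodMk measurable_snd.fst)).mul
      (measurable_hoeffdingKernel.comp (measurable_fst.snd.prodMk measurable_snd.snd))
  refine (integrable_prod_iff hmeas.aestronglyMeasurable).2
    ⟨ae_of_all _ fun p =>
      (integrable_hoeffdingKernel p.1).mul_prod (integrable_hoeffdingKernel p.2), ?_⟩
  convert hρ.abs using 2 with p
  simp only [norm_mul, Real.norm_eq_abs]
  rw [integral_prod_mul (fun s => |hoeffdingKernel p.1 s|) (fun t => |hoeffdingKernel p.2 t|),
    integral_abs_hoeffdingKernel, integral_abs_hoeffdingKernel, abs_mul]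

lemma integral_mul_eq_integral_integral_hoeffdingKernel (ρ : Measure (ℝ × ℝ)) [SFinite ρ]
    (hρ : Integrable (fun p => p.1 * p.2) ρ) :
    ∫ p, p.1 * p.2 ∂ρ =
      ∫ st : ℝ × ℝ, ∫ p, hoeffdingKernel p.1 st.1 * hoeffdingKernel p.2 st.2 ∂ρ
        ∂(volume.prod volume) := by
  calc ∫ p, p.1 * p.2 ∂ρ
      = ∫ p, ∫ st : ℝ × ℝ, hoeffdingKernel p.1 st.1 * hoeffdingKernel p.2 st.2
          ∂(volume.prod volume) ∂ρ := by
        congr 1 with p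
        rw [integral_prod_mul (hoeffdingKernel p.1) (hoeffdingKernel p.2),
          integral_hoeffdingKernel, integral_hoeffdingKernel]
    _ = _ := integral_integral_swap (integrable_hoeffdingKernel_mul_prod ρ hρ)

lemma integral_indicator_sub_mul_indicator_sub {α : Type*} [MeasurableSpace α] (ρ : Measure α)
    [IsProbabilityMeasure ρ] {A B : Set α} (hA : MeasurableSet A) (hB : MeasurableSet B)
    (a b : ℝ) :
    ∫ p, (A.indicator 1 p - a) * (B.indicator 1 p - b) ∂ρ =
      ρ.real (A ∩ B) - b * ρ.real A - a * ρ.real B + a * b := by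
  have hexpand (p : α) : (A.indicator 1 p - a) * (B.indicator 1 p - b) =
      (A ∩ B).indicator 1 p - b * A.indicator 1 p - a * B.indicator 1 p + a * b := by
    rw [inter_indicator_one, Pi.mul_apply]
    ring
  have hint {C : Set α} (hC : MeasurableSet C) : Integrable (C.indicator (1 : α → ℝ)) ρ :=
    (integrable_const 1).indicator hC
  have := hint (hA.inter hB)
  have := hint hA
  have := hint hB
  simp only [hexpand]
  rw [integral_add, integral_sub, integral_sub, integral_const_mul, integral_const_mul,
    integral_indicator_one (hA.inter hB), integral_indicator_one hA, integral_indicator_one hB,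
    integral_const, probReal_univ, one_smul]
  all_goals fun_prop

lemma integral_hoeffdingKernel_mul_le {ρ ρ' : Measure (ℝ × ℝ)} [IsProbabilityMeasure ρ]
    [IsProbabilityMeasure ρ'] (hfst : ρ.map Prod.fst = ρ'.map Prod.fst)
    (hsnd : ρ.map Prod.snd = ρ'.map Prod.snd) {s t : ℝ}
    (h : ρ (Ioi s ×ˢ Ioi t) ≤ ρ' (Ioi s ×ˢ Ioi t)) :
    ∫ p, hoeffdingKernel p.1 s * hoeffdingKernel p.2 t ∂ρ ≤
      ∫ p, hoeffdingKernel p.1 s * hoeffdingKernel p.2 t ∂ρ' := by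
  have hK (σ : Measure (ℝ × ℝ)) [IsProbabilityMeasure σ] :
      ∫ p, hoeffdingKernel p.1 s * hoeffdingKernel p.2 t ∂σ =
        σ.real (Ioi s ×ˢ Ioi t) - (Iio 0).indicator 1 t * (σ.map Prod.fst).real (Ioi s)
          - (Iio 0).indicator 1 s * (σ.map Prod.snd).real (Ioi t)
          + (Iio 0).indicator 1 s * (Iio 0).indicator 1 t := by
    rw [map_measureReal_apply measurable_fst measurableSet_Ioi,
      map_measureReal_apply measurable_snd measurableSet_Ioi, Set.prod_eq]
    exact integral_indicator_sub_mul_indicator_sub σ (measurable_fst measurableSet_Ioi)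
      (measurable_snd measurableSet_Ioi) _ _
  rw [hK ρ, hK ρ', hfst, hsnd]
  have := ENNReal.toReal_mono (measure_ne_top _ _) h
  simp only [measureReal_def] at *
  linarith

theorem integral_mul_le_of_measure_Ioi_prod_Ioi_le {ρ ρ' : Measure (ℝ × ℝ)} [IsProbabilityMeasure ρ]
    [IsProbabilityMeasure ρ'] (hfst : ρ.map Prod.fst = ρ'.map Prod.fst)
    (hsnd : ρ.map Prod.snd = ρ'.map Prod.snd) (hρ : Integrable (fun p => p.1 * p.2) ρ)
    (hρ' : Integrable (fun p => p.1 * p.2) ρ')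
    (h : ∀ s t, ρ (Ioi s ×ˢ Ioi t) ≤ ρ' (Ioi s ×ˢ Ioi t)) :
    ∫ p, p.1 * p.2 ∂ρ ≤ ∫ p, p.1 * p.2 ∂ρ' := by
  rw [integral_mul_eq_integral_integral_hoeffdingKernel ρ hρ,
    integral_mul_eq_integral_integral_hoeffdingKernel ρ' hρ']
  exact integral_mono (integrable_hoeffdingKernel_mul_prod ρ hρ).integral_prod_right
    (integrable_hoeffdingKernel_mul_prod ρ' hρ').integral_prod_right
    fun st => integral_hoeffdingKernel_mul_le hfst hsnd (h st.1 st.2)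

lemma integrable_mul_of_integrable_sq_map {ρ : Measure (ℝ × ℝ)}
    (h₁ : Integrable (fun x => x ^ 2) (ρ.map Prod.fst))
    (h₂ : Integrable (fun x => x ^ 2) (ρ.map Prod.snd)) :
    Integrable (fun p => p.1 * p.2) ρ := by
  have hfst : MemLp Prod.fst 2 ρ :=
    (memLp_map_measure_iff aestronglyMeasurable_id measurable_fst.aemeasurable).1
      ((memLp_two_iff_integrable_sq aestronglyMeasurable_id).2 h₁)
  have hsnd : MemLp Prod.snd 2 ρ :=
    (memLp_map_measure_iff aestronglyMeasurable_id measurable_snd.aemeasurable).1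
      ((memLp_two_iff_integrable_sq aestronglyMeasurable_id).2 h₂)
  exact hfst.integrable_mul hsnd

/-- Upper Fréchet–Hoeffding bound: for any coupling `π` of marginals `μ, ν` with finite second
moments, `∫ x y dπ ≤ ∫₀¹ Q_μ(u) Q_ν(u) du`; the comonotone coupling maximizes the expected
product. -/
theorem integral_mul_le_comonotone (π : Measure (ℝ × ℝ)) [IsProbabilityMeasure π]
    (μ ν : Measure ℝ)
    (hμ : Measure.map Prod.fst π = μ) (hν : Measure.map Prod.snd π = ν)
    (hμ2 : Integrable (fun x : ℝ => x ^ 2) μ) (hν2 : Integrable (fun x : ℝ => x ^ 2) ν) :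
    (∫ p : ℝ × ℝ, p.1 * p.2 ∂π) ≤
      ∫ u in Set.Ioo (0 : ℝ) 1, quantile μ u * quantile ν u := by
  have : IsProbabilityMeasure μ := hμ ▸ Measure.isProbabilityMeasure_map measurable_fst.aemeasurable
  have : IsProbabilityMeasure ν := hν ▸ Measure.isProbabilityMeasure_map measurable_snd.aemeasurable
  have hμc := comonotoneCoupling_map_fst μ ν
  have hνc := comonotoneCoupling_map_snd μ ν
  rw [← integral_comonotoneCoupling_mul]
  refine integral_mul_le_of_measure_Ioi_prod_Ioi_le (hμ.trans hμc.symm) (hν.trans hνc.symm)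
    (integrable_mul_of_integrable_sq_map (by rwa [hμ]) (by rwa [hν]))
    (integrable_mul_of_integrable_sq_map (by rwa [hμc]) (by rwa [hνc])) fun s t => ?_
  rw [comonotoneCoupling_Ioi_prod_Ioi, ← hμ, ← hν]
  exact measure_Ioi_prod_Ioi_le_min π s t
end
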